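/- arXiv:0710.0091 — 2 statements merged into one kernel-verified Lean document; each statement's English description precedes it below -/
import Mathlib

section
/- Exactly 9 of the 48 vectors K in the box B₁ = {0,2}×{0,2}×{0,2}×{0,2}×{-1,1,3} ⊂ ℤ⁵ initiate a successful path for the matrix Q₁, namely (0,0,0,0,1), (0,0,0,0,-1), (2,0,0,0,1), (2,0,0,0,-1), (0,0,0,2,1), (0,0,0,2,-1), (0,0,0,0,3), (0,0,2,0,-1), and (0,2,0,0,-1). (By the Ozsváth–Szabó algorithm this computes the Heegaard Floer homology of the plumbed 3-manifold Y₁ = Σ(mirror of 8₂₀) and, since 9 = |H₁(Y₁;ℤ)|, shows that Y₁ is an L-space.) -/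
/-!
Pushing at a pivot `i` raises every other coordinate `j` by `2 Q j i ≥ 0`, so once a coordinate
exceeds `-mⱼ` it stays there and the final box is out of reach. Hence two distinct pivots either
commute (`Q i j = 0`) or each push makes the other pivot overshoot, and the algorithm is
confluent: whether a successful path exists is decided by any single maximal path. For `Q₁` the
greedy path (always pushing at the first pivot) from each of the 48 box vectors ends within
9 steps either in the final box or at an overshooting vector, which is checked by evaluation.
-/

open Matrix

/-- `K` initiates a successful path for the symmetric matrix `Q` (whose diagonal
entries play the role of the weights `mᵢ`): there is a finite sequence starting at `K`,
each step adding twice a column `Q·eᵢ` at an index `i` where the current vector has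
`i`-th coordinate `-mᵢ = -(Q i i)`, ending at a vector `L` with
`Q i i ≤ L i ≤ -(Q i i) - 2` for all `i`. -/
def InitiatesSuccessfulPath {n : ℕ} (Q : Matrix (Fin n) (Fin n) ℤ) (K : Fin n → ℤ) : Prop :=
  ∃ (N : ℕ) (P : ℕ → Fin n → ℤ), P 0 = K ∧
    (∀ j < N, ∃ i : Fin n, P j i = -(Q i i) ∧
      P (j + 1) = fun k => P j k + 2 * Q k i) ∧
    (∀ i : Fin n, Q i i ≤ P N i ∧ P N i ≤ -(Q i i) - 2)

/-- The intersection matrix `Q₁` of the plumbing tree `G₁`. -/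
def Q1 : Matrix (Fin 5) (Fin 5) ℤ :=
  !![-2, 1, 0, 0, 0;
      1,-2, 1, 0, 1;
      0, 1,-2, 1, 0;
      0, 0, 1,-2, 0;
      0, 1, 0, 0,-3]

section FullPaths

variable {n : ℕ} (Q : Matrix (Fin n) (Fin n) ℤ)

def addTwiceColumn (K : Fin n → ℤ) (i : Fin n) : Fin n → ℤ := fun k => K k + 2 * Q k i

def IsFinal (L : Fin n → ℤ) : Prop := ∀ i, Q i i ≤ L i ∧ L i ≤ -(Q i i) - 2

def Overshoots (K : Fin n → ℤ) : Prop := ∃ i, -(Q i i) < K i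

inductive HasSuccessfulPath : (Fin n → ℤ) → Prop
  | final {L : Fin n → ℤ} : IsFinal Q L → HasSuccessfulPath L
  | step {K : Fin n → ℤ} (i : Fin n) :
      K i = -(Q i i) → HasSuccessfulPath (addTwiceColumn Q K i) → HasSuccessfulPath K

instance (L : Fin n → ℤ) : Decidable (IsFinal Q L) := by unfold IsFinal; infer_instance

instance (K : Fin n → ℤ) : Decidable (Overshoots Q K) := by unfold Overshoots; infer_instance

def firstPivot (K : Fin n → ℤ) : Option (Fin n) :=
  (List.finRange n).find? fun i => K i = -(Q i i)

def greedyRun : ℕ → (Fin n → ℤ) → Fin n → ℤ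
  | 0, K => K
  | f + 1, K =>
    match firstPivot Q K with
    | none => K
    | some i => greedyRun f (addTwiceColumn Q K i)

variable {Q}

@[simp]
lemma addTwiceColumn_apply (K : Fin n → ℤ) (i k : Fin n) :
    addTwiceColumn Q K i k = K k + 2 * Q k i := rfl

lemma addTwiceColumn_comm (K : Fin n → ℤ) (i j : Fin n) :
    addTwiceColumn Q (addTwiceColumn Q K i) j = addTwiceColumn Q (addTwiceColumn Q K j) i := by
  funext k
  simp only [addTwiceColumn_apply]
  ring

lemma initiatesSuccessfulPath_iff_hasSuccessfulPath {K : Fin n → ℤ} :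
    InitiatesSuccessfulPath Q K ↔ HasSuccessfulPath Q K := by
  constructor
  · rintro ⟨N, P, rfl, hstep, hfinal⟩
    induction N generalizing P with
    | zero => exact .final hfinal
    | succ N ih =>
      obtain ⟨i, hi, hP1⟩ := hstep 0 N.succ_pos
      have hP1 : addTwiceColumn Q (P 0) i = P 1 := hP1.symm
      refine .step i hi (hP1 ▸ ih (fun j => P (j + 1)) (fun j hj => ?_) hfinal)
      simpa only [add_right_comm] using hstep (j + 1) (by omega)
  · intro h
    induction h with
    | final hL => exact ⟨0, fun _ => _, rfl, fun _ h => absurd h (Nat.not_lt_zero _), hL⟩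
    | @step K i hi _ ih =>
      obtain ⟨N, P, hP0, hstep, hfinal⟩ := ih
      refine ⟨N + 1, fun j => Nat.casesOn j K P, rfl, fun j hj => ?_, hfinal⟩
      cases j with
      | zero => exact ⟨i, hi, hP0⟩
      | succ j => exact hstep j (by omega)

section NonnegOffDiag

variable (hQ : ∀ i j, i ≠ j → 0 ≤ Q i j)
include hQ

lemma Overshoots.addTwiceColumn {K : Fin n → ℤ} (hK : Overshoots Q K) {i : Fin n}
    (hi : K i = -(Q i i)) : Overshoots Q (addTwiceColumn Q K i) := by
  obtain ⟨j, hj⟩ := hK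
  have hji : j ≠ i := by rintro rfl; omega
  exact ⟨j, by simpa using by linarith [hQ j i hji]⟩

lemma HasSuccessfulPath.not_overshoots {K : Fin n → ℤ} (h : HasSuccessfulPath Q K) :
    ¬ Overshoots Q K := by
  induction h with
  | final hL => rintro ⟨i, hi⟩; linarith [(hL i).2]
  | step i hi _ ih => exact fun hK => ih (hK.addTwiceColumn hQ hi)

lemma HasSuccessfulPath.addTwiceColumn (hsymm : Q.IsSymm) {K : Fin n → ℤ}
    (h : HasSuccessfulPath Q K) {j : Fin n} (hj : K j = -(Q j j)) :
    HasSuccessfulPath Q (addTwiceColumn Q K j) := by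
  induction h with
  | final hL => linarith [(hL j).2]
  | @step K i hi hsucc ih =>
    by_cases hij : i = j
    · exact hij ▸ hsucc
    have hQji : Q j i = 0 := by
      refine le_antisymm (not_lt.mp fun hpos => ?_) (hQ j i (Ne.symm hij))
      exact hsucc.not_overshoots hQ ⟨j, by simp only [addTwiceColumn_apply]; omega⟩
    have hQij : Q i j = 0 := (hsymm.apply i j).symm.trans hQji
    refine .step i (by simp [hi, hQij]) ?_
    rw [addTwiceColumn_comm]
    exact ih (by simp [hj, hQji])

lemma hasSuccessfulPath_greedyRun_iff (hsymm : Q.IsSymm) (f : ℕ) (K : Fin n → ℤ) :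
    HasSuccessfulPath Q (greedyRun Q f K) ↔ HasSuccessfulPath Q K := by
  induction f generalizing K with
  | zero => rfl
  | succ f ih =>
    rw [greedyRun]
    split
    · rfl
    · next i hpivot =>
      have hi : K i = -(Q i i) := by simpa using List.find?_some hpivot
      rw [ih]
      exact ⟨.step i hi, fun h => h.addTwiceColumn hQ hsymm hi⟩

lemma hasSuccessfulPath_iff_of_greedyRun (hsymm : Q.IsSymm) {f : ℕ} {K : Fin n → ℤ} {p : Prop}
    (hfinal : p → IsFinal Q (greedyRun Q f K))
    (hover : ¬ p → Overshoots Q (greedyRun Q f K)) : HasSuccessfulPath Q K ↔ p := by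
  rw [← hasSuccessfulPath_greedyRun_iff hQ hsymm f]
  refine ⟨fun h => ?_, fun hp => .final (hfinal hp)⟩
  by_contra hp
  exact h.not_overshoots hQ (hover hp)

end NonnegOffDiag

end FullPaths

lemma Q1_isSymm : Q1.IsSymm := by decide

lemma Q1_offDiag_nonneg : ∀ i j : Fin 5, i ≠ j → 0 ≤ Q1 i j := by
  intro i j hij
  fin_cases i <;> fin_cases j <;> simp_all [Q1]

def successfulB1 : List (Fin 5 → ℤ) :=
  [![0,0,0,0,1], ![0,0,0,0,-1], ![2,0,0,0,1], ![2,0,0,0,-1], ![0,0,0,2,1], ![0,0,0,2,-1],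
    ![0,0,0,0,3], ![0,0,2,0,-1], ![0,2,0,0,-1]]

lemma greedyRun_Q1 :
    ∀ a ∈ [0, 2], ∀ b ∈ [0, 2], ∀ c ∈ [0, 2], ∀ d ∈ [0, 2], ∀ e ∈ [-1, 1, 3],
    (![a, b, c, d, e] ∈ successfulB1 → IsFinal Q1 (greedyRun Q1 9 ![a, b, c, d, e])) ∧
    (![a, b, c, d, e] ∉ successfulB1 → Overshoots Q1 (greedyRun Q1 9 ![a, b, c, d, e])) := by
  decide

/-- Exactly 9 of the 48 vectors in the box `{0,2}⁴ × {-1,1,3}` initiate a successful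
path for `Q₁`, namely the nine listed vectors. -/
theorem successful_vectors_Q1 (K : Fin 5 → ℤ)
    (h0 : K 0 = 0 ∨ K 0 = 2) (h1 : K 1 = 0 ∨ K 1 = 2)
    (h2 : K 2 = 0 ∨ K 2 = 2) (h3 : K 3 = 0 ∨ K 3 = 2)
    (h4 : K 4 = -1 ∨ K 4 = 1 ∨ K 4 = 3) :
    InitiatesSuccessfulPath Q1 K ↔
      K = ![0,0,0,0,1] ∨ K = ![0,0,0,0,-1] ∨ K = ![2,0,0,0,1] ∨
      K = ![2,0,0,0,-1] ∨ K = ![0,0,0,2,1] ∨ K = ![0,0,0,2,-1] ∨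
      K = ![0,0,0,0,3] ∨ K = ![0,0,2,0,-1] ∨ K = ![0,2,0,0,-1] := by
  have hK : ![K 0, K 1, K 2, K 3, K 4] = K := by funext i; fin_cases i <;> rfl
  have hrun := greedyRun_Q1 (K 0) (by simpa using h0) (K 1) (by simpa using h1) (K 2)
    (by simpa using h2) (K 3) (by simpa using h3) (K 4) (by simpa using h4)
  rw [hK] at hrun
  rw [initiatesSuccessfulPath_iff_hasSuccessfulPath,
    hasSuccessfulPath_iff_of_greedyRun Q1_offDiag_nonneg Q1_isSymm hrun.1 hrun.2]
  simp only [successfulB1, List.mem_cons, List.not_mem_nil, or_false]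
end

section
/- Exactly 9 of the 96 vectors K in the box B₂ = {0,2}×{0,2}×{0,2}×{0,2}×{0,2}×{-1,1,3} ⊂ ℤ⁶ initiate a successful path for the matrix Q₂, namely (0,0,0,0,0,1), (0,0,0,0,0,-1), (0,0,0,0,0,3), (0,0,0,0,2,-1), (2,0,0,0,0,-1), (0,0,0,2,0,-1), (0,2,0,0,0,-1), (2,0,0,0,0,1), and (0,0,0,0,2,1). (By the Ozsváth–Szabó algorithm this computes the Heegaard Floer homology of the plumbed 3-manifold Y₂ = Σ(mirror of 9₄₆) and, since 9 = |H₁(Y₂;ℤ)|, shows that Y₂ is an L-space.) -/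
open Matrix

/-- The intersection matrix `Q₂` of the plumbing tree `G₂`. -/
def Q2 : Matrix (Fin 6) (Fin 6) ℤ :=
  !![-2, 1, 0, 0, 0, 0;
      1,-2, 1, 0, 0, 0;
      0, 1,-2, 1, 0, 1;
      0, 0, 1,-2, 1, 0;
      0, 0, 0, 1,-2, 0;
      0, 0, 1, 0, 0,-3]

abbrev T := ℤ × ℤ × ℤ × ℤ × ℤ × ℤ

def toT (K : Fin 6 → ℤ) : T := (K 0, K 1, K 2, K 3, K 4, K 5)

def fromT (t : T) : Fin 6 → ℤ := ![t.1, t.2.1, t.2.2.1, t.2.2.2.1, t.2.2.2.2.1, t.2.2.2.2.2]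

def tcoord (t : T) : Fin 6 → ℤ := fromT t

def bnd : Fin 6 → ℤ := ![2,2,2,2,2,3]

def stepT (t : T) (i : Fin 6) : T :=
  (t.1 + 2 * Q2 0 i, t.2.1 + 2 * Q2 1 i, t.2.2.1 + 2 * Q2 2 i,
   t.2.2.2.1 + 2 * Q2 3 i, t.2.2.2.2.1 + 2 * Q2 4 i, t.2.2.2.2.2 + 2 * Q2 5 i)

def dd0 : List T := [(-2, 0, 0, 0, 2, 3), (-2, 0, 0, 2, -2, 3), (-2, 0, 0, 2, 0, 1), (-2, 0, 0, 2, 0, 3), (-2, 0, 0, 2, 2, -1), (-2, 0, 0, 2, 2, 1), (-2, 0, 0, 2, 2, 3), (-2, 0, 2, -2, 0, 3), (-2, 0, 2, -2, 2, 1), (-2, 0, 2, -2, 2, 3), (-2, 0, 2, 0, -2, 1), (-2, 0, 2, 0, -2, 3), (-2, 0, 2, 0, 0, 1), (-2, 0, 2, 0, 0, 3), (-2, 0, 2, 0, 2, -3), (-2, 0, 2, 0, 2, -1), (-2, 0, 2, 0, 2, 1), (-2, 0, 2, 0, 2, 3), (-2, 0, 2, 2, -2, -3), (-2, 0, 2,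 2, -2, -1), (-2, 0, 2, 2, -2, 1), (-2, 0, 2, 2, -2, 3), (-2, 0, 2, 2, 0, -3), (-2, 0, 2, 2, 0, -1), (-2, 0, 2, 2, 0, 1)]
def dd1 : List T := [(-2, 0, 2, 2, 0, 3), (-2, 0, 2, 2, 2, -3), (-2, 0, 2, 2, 2, -1), (-2, 0, 2, 2, 2, 1), (-2, 0, 2, 2, 2, 3), (-2, 2, -2, 0, 2, 3), (-2, 2, -2, 2, -2, 3), (-2, 2, -2, 2, 0, 3), (-2, 2, -2, 2, 2, -1), (-2, 2, -2, 2, 2, 1), (-2, 2, -2, 2, 2, 3), (-2, 2, 0, -2, 0, 3), (-2, 2, 0, -2, 2, 3), (-2, 2, 0, 0, -2, 3), (-2, 2, 0, 0, 0, 3), (-2, 2, 0, 0, 2, -3), (-2, 2, 0, 0, 2, -1), (-2, 2, 0, 0, 2, 1), (-2, 2, 0, 0, 2, 3), (-2, 2, 0, 2, -2, -3), (-2, 2, 0, 2, -2, -1), (-2, 2, 0, 2, -2, 1), (-2, 2, 0, 2, -2, 3), (-2, 2, 0, 2, 0, -3), (-2, 2, 0, 2, 0, -1)]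
def dd2 : List T := [(-2, 2, 0, 2, 0, 1), (-2, 2, 0, 2, 0, 3), (-2, 2, 0, 2, 2, -3), (-2, 2, 0, 2, 2, -1), (-2, 2, 0, 2, 2, 1), (-2, 2, 0, 2, 2, 3), (-2, 2, 2, -2, 0, -3), (-2, 2, 2, -2, 0, -1), (-2, 2, 2, -2, 0, 1), (-2, 2, 2, -2, 0, 3), (-2, 2, 2, -2, 2, -3), (-2, 2, 2, -2, 2, -1), (-2, 2, 2, -2, 2, 1), (-2, 2, 2, -2, 2, 3), (-2, 2, 2, 0, -2, -3), (-2, 2, 2, 0, -2, -1), (-2, 2, 2, 0, -2, 1), (-2, 2, 2, 0, -2, 3), (-2, 2, 2, 0, 0, -3), (-2, 2, 2, 0, 0, -1), (-2, 2, 2, 0, 0, 1), (-2, 2, 2, 0, 0, 3), (-2, 2, 2, 0, 2, -3), (-2, 2, 2, 0, 2, -1), (-2, 2, 2, 0, 2, 1)]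
def dd3 : List T := [(-2, 2, 2, 0, 2, 3), (-2, 2, 2, 2, -2, -3), (-2, 2, 2, 2, -2, -1), (-2, 2, 2, 2, -2, 1), (-2, 2, 2, 2, -2, 3), (-2, 2, 2, 2, 0, -3), (-2, 2, 2, 2, 0, -1), (-2, 2, 2, 2, 0, 1), (-2, 2, 2, 2, 0, 3), (-2, 2, 2, 2, 2, -3), (-2, 2, 2, 2, 2, -1), (-2, 2, 2, 2, 2, 1), (-2, 2, 2, 2, 2, 3), (0, -2, 0, 0, 2, 3), (0, -2, 0, 2, -2, 3), (0, -2, 0, 2, 0, 3), (0, -2, 0, 2, 2, -1), (0, -2, 0, 2, 2, 1), (0, -2, 0, 2, 2, 3), (0, -2, 2, -2, 0, 3), (0, -2, 2, -2, 2, 3), (0, -2, 2, 0, -2, 3), (0, -2, 2, 0, 0, 3), (0, -2, 2, 0, 2, -3), (0, -2, 2, 0, 2, -1)]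
def dd4 : List T := [(0, -2, 2, 0, 2, 1), (0, -2, 2, 0, 2, 3), (0, -2, 2, 2, -2, -3), (0, -2, 2, 2, -2, -1), (0, -2, 2, 2, -2, 1), (0, -2, 2, 2, -2, 3), (0, -2, 2, 2, 0, -3), (0, -2, 2, 2, 0, -1), (0, -2, 2, 2, 0, 1), (0, -2, 2, 2, 0, 3), (0, -2, 2, 2, 2, -3), (0, -2, 2, 2, 2, -1), (0, -2, 2, 2, 2, 1), (0, -2, 2, 2, 2, 3), (0, 0, -2, 2, 2, -1), (0, 0, -2, 2, 2, 1), (0, 0, -2, 2, 2, 3), (0, 0, 0, 0, 2, 3), (0, 0, 0, 2, -2, 3), (0, 0, 0, 2, 0, 1), (0, 0, 0, 2, 0, 3), (0, 0, 0, 2, 2, -3), (0, 0, 0, 2, 2, -1), (0, 0, 0, 2, 2, 1), (0, 0, 0, 2, 2, 3)]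
def dd5 : List T := [(0, 0, 2, -2, 0, 3), (0, 0, 2, -2, 2, 1), (0, 0, 2, -2, 2, 3), (0, 0, 2, 0, -2, 1), (0, 0, 2, 0, -2, 3), (0, 0, 2, 0, 0, -1), (0, 0, 2, 0, 0, 1), (0, 0, 2, 0, 0, 3), (0, 0, 2, 0, 2, -3), (0, 0, 2, 0, 2, -1), (0, 0, 2, 0, 2, 1), (0, 0, 2, 0, 2, 3), (0, 0, 2, 2, -2, -3), (0, 0, 2, 2, -2, -1), (0, 0, 2, 2, -2, 1), (0, 0, 2, 2, -2, 3), (0, 0, 2, 2, 0, -3), (0, 0, 2, 2, 0, -1), (0, 0, 2, 2, 0, 1), (0, 0, 2, 2, 0, 3), (0, 0, 2, 2, 2, -3), (0, 0, 2, 2, 2, -1), (0, 0, 2, 2, 2, 1), (0, 0, 2, 2, 2, 3), (0, 2, -2, 0, 2, 3)]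
def dd6 : List T := [(0, 2, -2, 2, -2, 3), (0, 2, -2, 2, 0, 1), (0, 2, -2, 2, 0, 3), (0, 2, -2, 2, 2, -1), (0, 2, -2, 2, 2, 1), (0, 2, -2, 2, 2, 3), (0, 2, 0, -2, 0, 3), (0, 2, 0, -2, 2, 1), (0, 2, 0, -2, 2, 3), (0, 2, 0, 0, -2, 1), (0, 2, 0, 0, -2, 3), (0, 2, 0, 0, 0, 1), (0, 2, 0, 0, 0, 3), (0, 2, 0, 0, 2, -3), (0, 2, 0, 0, 2, -1), (0, 2, 0, 0, 2, 1), (0, 2, 0, 0, 2, 3), (0, 2, 0, 2, -2, -3), (0, 2, 0, 2, -2, -1), (0, 2, 0, 2, -2, 1), (0, 2, 0, 2, -2, 3), (0, 2, 0, 2, 0, -3), (0, 2, 0, 2, 0, -1), (0, 2, 0, 2, 0, 1), (0, 2, 0, 2, 0, 3)]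
def dd7 : List T := [(0, 2, 0, 2, 2, -3), (0, 2, 0, 2, 2, -1), (0, 2, 0, 2, 2, 1), (0, 2, 0, 2, 2, 3), (0, 2, 2, -2, 0, -3), (0, 2, 2, -2, 0, -1), (0, 2, 2, -2, 0, 1), (0, 2, 2, -2, 0, 3), (0, 2, 2, -2, 2, -3), (0, 2, 2, -2, 2, -1), (0, 2, 2, -2, 2, 1), (0, 2, 2, -2, 2, 3), (0, 2, 2, 0, -2, -3), (0, 2, 2, 0, -2, -1), (0, 2, 2, 0, -2, 1), (0, 2, 2, 0, -2, 3), (0, 2, 2, 0, 0, -3), (0, 2, 2, 0, 0, -1), (0, 2, 2, 0, 0, 1), (0, 2, 2, 0, 0, 3), (0, 2, 2, 0, 2, -3), (0, 2, 2, 0, 2, -1), (0, 2, 2, 0, 2, 1), (0, 2, 2, 0, 2, 3), (0, 2, 2, 2, -2, -3)]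
def dd8 : List T := [(0, 2, 2, 2, -2, -1), (0, 2, 2, 2, -2, 1), (0, 2, 2, 2, -2, 3), (0, 2, 2, 2, 0, -3), (0, 2, 2, 2, 0, -1), (0, 2, 2, 2, 0, 1), (0, 2, 2, 2, 0, 3), (0, 2, 2, 2, 2, -3), (0, 2, 2, 2, 2, -1), (0, 2, 2, 2, 2, 1), (0, 2, 2, 2, 2, 3), (2, -2, 0, 0, 2, 3), (2, -2, 0, 2, -2, 3), (2, -2, 0, 2, 0, 1), (2, -2, 0, 2, 0, 3), (2, -2, 0, 2, 2, -1), (2, -2, 0, 2, 2, 1), (2, -2, 0, 2, 2, 3), (2, -2, 2, -2, 0, 3), (2, -2, 2, -2, 2, 1), (2, -2, 2, -2, 2, 3), (2, -2, 2, 0, -2, 1), (2, -2, 2, 0, -2, 3), (2, -2, 2, 0, 0, 1), (2, -2, 2, 0, 0, 3)]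
def dd9 : List T := [(2, -2, 2, 0, 2, -3), (2, -2, 2, 0, 2, -1), (2, -2, 2, 0, 2, 1), (2, -2, 2, 0, 2, 3), (2, -2, 2, 2, -2, -3), (2, -2, 2, 2, -2, -1), (2, -2, 2, 2, -2, 1), (2, -2, 2, 2, -2, 3), (2, -2, 2, 2, 0, -3), (2, -2, 2, 2, 0, -1), (2, -2, 2, 2, 0, 1), (2, -2, 2, 2, 0, 3), (2, -2, 2, 2, 2, -3), (2, -2, 2, 2, 2, -1), (2, -2, 2, 2, 2, 1), (2, -2, 2, 2, 2, 3), (2, 0, -2, 0, 2, 3), (2, 0, -2, 2, -2, 3), (2, 0, -2, 2, 0, 3), (2, 0, -2, 2, 2, -1), (2, 0, -2, 2, 2, 1), (2, 0, -2, 2, 2, 3), (2, 0, 0, -2, 0, 3), (2, 0, 0, -2, 2, 3), (2, 0, 0, 0, -2, 3)]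
def dd10 : List T := [(2, 0, 0, 0, 0, 3), (2, 0, 0, 0, 2, -3), (2, 0, 0, 0, 2, -1), (2, 0, 0, 0, 2, 1), (2, 0, 0, 0, 2, 3), (2, 0, 0, 2, -2, -3), (2, 0, 0, 2, -2, -1), (2, 0, 0, 2, -2, 1), (2, 0, 0, 2, -2, 3), (2, 0, 0, 2, 0, -3), (2, 0, 0, 2, 0, -1), (2, 0, 0, 2, 0, 1), (2, 0, 0, 2, 0, 3), (2, 0, 0, 2, 2, -3), (2, 0, 0, 2, 2, -1), (2, 0, 0, 2, 2, 1), (2, 0, 0, 2, 2, 3), (2, 0, 2, -2, 0, -3), (2, 0, 2, -2, 0, -1), (2, 0, 2, -2, 0, 1), (2, 0, 2, -2, 0, 3), (2, 0, 2, -2, 2, -3), (2, 0, 2, -2, 2, -1), (2, 0, 2, -2, 2, 1), (2, 0, 2, -2, 2, 3)]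
def dd11 : List T := [(2, 0, 2, 0, -2, -3), (2, 0, 2, 0, -2, -1), (2, 0, 2, 0, -2, 1), (2, 0, 2, 0, -2, 3), (2, 0, 2, 0, 0, -3), (2, 0, 2, 0, 0, -1), (2, 0, 2, 0, 0, 1), (2, 0, 2, 0, 0, 3), (2, 0, 2, 0, 2, -3), (2, 0, 2, 0, 2, -1), (2, 0, 2, 0, 2, 1), (2, 0, 2, 0, 2, 3), (2, 0, 2, 2, -2, -3), (2, 0, 2, 2, -2, -1), (2, 0, 2, 2, -2, 1), (2, 0, 2, 2, -2, 3), (2, 0, 2, 2, 0, -3), (2, 0, 2, 2, 0, -1), (2, 0, 2, 2, 0, 1), (2, 0, 2, 2, 0, 3), (2, 0, 2, 2, 2, -3), (2, 0, 2, 2, 2, -1), (2, 0, 2, 2, 2, 1), (2, 0, 2, 2, 2, 3), (2, 2, -2, 0, 0, -1)]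
def dd12 : List T := [(2, 2, -2, 0, 0, 1), (2, 2, -2, 0, 0, 3), (2, 2, -2, 0, 2, -1), (2, 2, -2, 0, 2, 1), (2, 2, -2, 0, 2, 3), (2, 2, -2, 2, -2, -1), (2, 2, -2, 2, -2, 1), (2, 2, -2, 2, -2, 3), (2, 2, -2, 2, 0, -1), (2, 2, -2, 2, 0, 1), (2, 2, -2, 2, 0, 3), (2, 2, -2, 2, 2, -1), (2, 2, -2, 2, 2, 1), (2, 2, -2, 2, 2, 3), (2, 2, 0, -2, 0, -1), (2, 2, 0, -2, 0, 1), (2, 2, 0, -2, 0, 3), (2, 2, 0, -2, 2, -1), (2, 2, 0, -2, 2, 1), (2, 2, 0, -2, 2, 3), (2, 2, 0, 0, -2, -1), (2, 2, 0, 0, -2, 1), (2, 2, 0, 0, -2, 3), (2, 2, 0, 0, 0, -3), (2, 2, 0, 0, 0, -1)]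
def dd13 : List T := [(2, 2, 0, 0, 0, 1), (2, 2, 0, 0, 0, 3), (2, 2, 0, 0, 2, -3), (2, 2, 0, 0, 2, -1), (2, 2, 0, 0, 2, 1), (2, 2, 0, 0, 2, 3), (2, 2, 0, 2, -2, -3), (2, 2, 0, 2, -2, -1), (2, 2, 0, 2, -2, 1), (2, 2, 0, 2, -2, 3), (2, 2, 0, 2, 0, -3), (2, 2, 0, 2, 0, -1), (2, 2, 0, 2, 0, 1), (2, 2, 0, 2, 0, 3), (2, 2, 0, 2, 2, -3), (2, 2, 0, 2, 2, -1), (2, 2, 0, 2, 2, 1), (2, 2, 0, 2, 2, 3), (2, 2, 2, -2, 0, -3), (2, 2, 2, -2, 0, -1), (2, 2, 2, -2, 0, 1), (2, 2, 2, -2, 0, 3), (2, 2, 2, -2, 2, -3), (2, 2, 2, -2, 2, -1), (2, 2, 2, -2, 2, 1)]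
def dd14 : List T := [(2, 2, 2, -2, 2, 3), (2, 2, 2, 0, -2, -3), (2, 2, 2, 0, -2, -1), (2, 2, 2, 0, -2, 1), (2, 2, 2, 0, -2, 3), (2, 2, 2, 0, 0, -3), (2, 2, 2, 0, 0, -1), (2, 2, 2, 0, 0, 1), (2, 2, 2, 0, 0, 3), (2, 2, 2, 0, 2, -3), (2, 2, 2, 0, 2, -1), (2, 2, 2, 0, 2, 1), (2, 2, 2, 0, 2, 3), (2, 2, 2, 2, -2, -3), (2, 2, 2, 2, -2, -1), (2, 2, 2, 2, -2, 1), (2, 2, 2, 2, -2, 3), (2, 2, 2, 2, 0, -3), (2, 2, 2, 2, 0, -1), (2, 2, 2, 2, 0, 1), (2, 2, 2, 2, 0, 3), (2, 2, 2, 2, 2, -3), (2, 2, 2, 2, 2, -1), (2, 2, 2, 2, 2, 1), (2, 2, 2, 2, 2, 3)]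

def deadL : List T := dd0 ++ dd1 ++ dd2 ++ dd3 ++ dd4 ++ dd5 ++ dd6 ++ dd7 ++ dd8 ++ dd9 ++ dd10 ++ dd11 ++ dd12 ++ dd13 ++ dd14

def HighT (t : T) : Prop := ∃ j : Fin 6, bnd j < tcoord t j

def Dead (K : Fin 6 → ℤ) : Prop := HighT (toT K) ∨ toT K ∈ deadL

def checkT (t : T) : Prop :=
  ∀ i : Fin 6, tcoord t i = bnd i → (HighT (stepT t i) ∨ stepT t i ∈ deadL)

instance : DecidablePred HighT := fun t => by unfold HighT; infer_instance
instance : DecidablePred checkT := fun t => by unfold checkT; infer_instance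

lemma tcoord_toT (K : Fin 6 → ℤ) (i : Fin 6) : tcoord (toT K) i = K i := by
  fin_cases i <;> rfl

lemma mneg_eq : ∀ i : Fin 6, -(Q2 i i) = bnd i := by decide

lemma diag_eq : ∀ i : Fin 6, Q2 i i = -(bnd i) := by decide

lemma offdiag_nonneg : ∀ i j : Fin 6, i ≠ j → 0 ≤ Q2 j i := by decide

lemma stepT_toT (K : Fin 6 → ℤ) (i : Fin 6) :
    toT (fun k => K k + 2 * Q2 k i) = stepT (toT K) i := rfl

lemma tcoord_stepT (K : Fin 6 → ℤ) (i j : Fin 6) :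
    tcoord (stepT (toT K) i) j = K j + 2 * Q2 j i := by
  fin_cases j <;> rfl

lemma c0 : checkT (-2, 0, 0, 0, 2, 3) := by decide
lemma c1 : checkT (-2, 0, 0, 2, -2, 3) := by decide
lemma c2 : checkT (-2, 0, 0, 2, 0, 1) := by decide
lemma c3 : checkT (-2, 0, 0, 2, 0, 3) := by decide
lemma c4 : checkT (-2, 0, 0, 2, 2, -1) := by decide
lemma c5 : checkT (-2, 0, 0, 2, 2, 1) := by decide
lemma c6 : checkT (-2, 0, 0, 2, 2, 3) := by decide
lemma c7 : checkT (-2, 0, 2, -2, 0, 3) := by decide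
lemma c8 : checkT (-2, 0, 2, -2, 2, 1) := by decide
lemma c9 : checkT (-2, 0, 2, -2, 2, 3) := by decide
lemma c10 : checkT (-2, 0, 2, 0, -2, 1) := by decide
lemma c11 : checkT (-2, 0, 2, 0, -2, 3) := by decide
lemma c12 : checkT (-2, 0, 2, 0, 0, 1) := by decide
lemma c13 : checkT (-2, 0, 2, 0, 0, 3) := by decide
lemma c14 : checkT (-2, 0, 2, 0, 2, -3) := by decide
lemma c15 : checkT (-2, 0, 2, 0, 2, -1) := by decide
lemma c16 : checkT (-2, 0, 2, 0, 2, 1) := by decide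
lemma c17 : checkT (-2, 0, 2, 0, 2, 3) := by decide
lemma c18 : checkT (-2, 0, 2, 2, -2, -3) := by decide
lemma c19 : checkT (-2, 0, 2, 2, -2, -1) := by decide
lemma c20 : checkT (-2, 0, 2, 2, -2, 1) := by decide
lemma c21 : checkT (-2, 0, 2, 2, -2, 3) := by decide
lemma c22 : checkT (-2, 0, 2, 2, 0, -3) := by decide
lemma c23 : checkT (-2, 0, 2, 2, 0, -1) := by decide
lemma c24 : checkT (-2, 0, 2, 2, 0, 1) := by decide
lemma F0 : dd0.Forall checkT := ⟨c0, c1, c2, c3, c4, c5, c6, c7, c8, c9, c10, c11, c12, c13, c14, c15, c16, c17, c18, c19, c20, c21, c22, c23, c24⟩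
lemma c25 : checkT (-2, 0, 2, 2, 0, 3) := by decide
lemma c26 : checkT (-2, 0, 2, 2, 2, -3) := by decide
lemma c27 : checkT (-2, 0, 2, 2, 2, -1) := by decide
lemma c28 : checkT (-2, 0, 2, 2, 2, 1) := by decide
lemma c29 : checkT (-2, 0, 2, 2, 2, 3) := by decide
lemma c30 : checkT (-2, 2, -2, 0, 2, 3) := by decide
lemma c31 : checkT (-2, 2, -2, 2, -2, 3) := by decide
lemma c32 : checkT (-2, 2, -2, 2, 0, 3) := by decide
lemma c33 : checkT (-2, 2, -2, 2, 2, -1) := by decide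
lemma c34 : checkT (-2, 2, -2, 2, 2, 1) := by decide
lemma c35 : checkT (-2, 2, -2, 2, 2, 3) := by decide
lemma c36 : checkT (-2, 2, 0, -2, 0, 3) := by decide
lemma c37 : checkT (-2, 2, 0, -2, 2, 3) := by decide
lemma c38 : checkT (-2, 2, 0, 0, -2, 3) := by decide
lemma c39 : checkT (-2, 2, 0, 0, 0, 3) := by decide
lemma c40 : checkT (-2, 2, 0, 0, 2, -3) := by decide
lemma c41 : checkT (-2, 2, 0, 0, 2, -1) := by decide
lemma c42 : checkT (-2, 2, 0, 0, 2, 1) := by decide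
lemma c43 : checkT (-2, 2, 0, 0, 2, 3) := by decide
lemma c44 : checkT (-2, 2, 0, 2, -2, -3) := by decide
lemma c45 : checkT (-2, 2, 0, 2, -2, -1) := by decide
lemma c46 : checkT (-2, 2, 0, 2, -2, 1) := by decide
lemma c47 : checkT (-2, 2, 0, 2, -2, 3) := by decide
lemma c48 : checkT (-2, 2, 0, 2, 0, -3) := by decide
lemma c49 : checkT (-2, 2, 0, 2, 0, -1) := by decide
lemma F1 : dd1.Forall checkT := ⟨c25, c26, c27, c28, c29, c30, c31, c32, c33, c34, c35, c36, c37, c38, c39, c40, c41, c42, c43, c44, c45, c46, c47, c48, c49⟩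
lemma c50 : checkT (-2, 2, 0, 2, 0, 1) := by decide
lemma c51 : checkT (-2, 2, 0, 2, 0, 3) := by decide
lemma c52 : checkT (-2, 2, 0, 2, 2, -3) := by decide
lemma c53 : checkT (-2, 2, 0, 2, 2, -1) := by decide
lemma c54 : checkT (-2, 2, 0, 2, 2, 1) := by decide
lemma c55 : checkT (-2, 2, 0, 2, 2, 3) := by decide
lemma c56 : checkT (-2, 2, 2, -2, 0, -3) := by decide
lemma c57 : checkT (-2, 2, 2, -2, 0, -1) := by decide
lemma c58 : checkT (-2, 2, 2, -2, 0, 1) := by decide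
lemma c59 : checkT (-2, 2, 2, -2, 0, 3) := by decide
lemma c60 : checkT (-2, 2, 2, -2, 2, -3) := by decide
lemma c61 : checkT (-2, 2, 2, -2, 2, -1) := by decide
lemma c62 : checkT (-2, 2, 2, -2, 2, 1) := by decide
lemma c63 : checkT (-2, 2, 2, -2, 2, 3) := by decide
lemma c64 : checkT (-2, 2, 2, 0, -2, -3) := by decide
lemma c65 : checkT (-2, 2, 2, 0, -2, -1) := by decide
lemma c66 : checkT (-2, 2, 2, 0, -2, 1) := by decide
lemma c67 : checkT (-2, 2, 2, 0, -2, 3) := by decide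
lemma c68 : checkT (-2, 2, 2, 0, 0, -3) := by decide
lemma c69 : checkT (-2, 2, 2, 0, 0, -1) := by decide
lemma c70 : checkT (-2, 2, 2, 0, 0, 1) := by decide
lemma c71 : checkT (-2, 2, 2, 0, 0, 3) := by decide
lemma c72 : checkT (-2, 2, 2, 0, 2, -3) := by decide
lemma c73 : checkT (-2, 2, 2, 0, 2, -1) := by decide
lemma c74 : checkT (-2, 2, 2, 0, 2, 1) := by decide
lemma F2 : dd2.Forall checkT := ⟨c50, c51, c52, c53, c54, c55, c56, c57, c58, c59, c60, c61, c62, c63, c64, c65, c66, c67, c68, c69, c70, c71, c72, c73, c74⟩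
lemma c75 : checkT (-2, 2, 2, 0, 2, 3) := by decide
lemma c76 : checkT (-2, 2, 2, 2, -2, -3) := by decide
lemma c77 : checkT (-2, 2, 2, 2, -2, -1) := by decide
lemma c78 : checkT (-2, 2, 2, 2, -2, 1) := by decide
lemma c79 : checkT (-2, 2, 2, 2, -2, 3) := by decide
lemma c80 : checkT (-2, 2, 2, 2, 0, -3) := by decide
lemma c81 : checkT (-2, 2, 2, 2, 0, -1) := by decide
lemma c82 : checkT (-2, 2, 2, 2, 0, 1) := by decide
lemma c83 : checkT (-2, 2, 2, 2, 0, 3) := by decide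
lemma c84 : checkT (-2, 2, 2, 2, 2, -3) := by decide
lemma c85 : checkT (-2, 2, 2, 2, 2, -1) := by decide
lemma c86 : checkT (-2, 2, 2, 2, 2, 1) := by decide
lemma c87 : checkT (-2, 2, 2, 2, 2, 3) := by decide
lemma c88 : checkT (0, -2, 0, 0, 2, 3) := by decide
lemma c89 : checkT (0, -2, 0, 2, -2, 3) := by decide
lemma c90 : checkT (0, -2, 0, 2, 0, 3) := by decide
lemma c91 : checkT (0, -2, 0, 2, 2, -1) := by decide
lemma c92 : checkT (0, -2, 0, 2, 2, 1) := by decide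
lemma c93 : checkT (0, -2, 0, 2, 2, 3) := by decide
lemma c94 : checkT (0, -2, 2, -2, 0, 3) := by decide
lemma c95 : checkT (0, -2, 2, -2, 2, 3) := by decide
lemma c96 : checkT (0, -2, 2, 0, -2, 3) := by decide
lemma c97 : checkT (0, -2, 2, 0, 0, 3) := by decide
lemma c98 : checkT (0, -2, 2, 0, 2, -3) := by decide
lemma c99 : checkT (0, -2, 2, 0, 2, -1) := by decide
lemma F3 : dd3.Forall checkT := ⟨c75, c76, c77, c78, c79, c80, c81, c82, c83, c84, c85, c86, c87, c88, c89, c90, c91, c92, c93, c94, c95, c96, c97, c98, c99⟩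
lemma c100 : checkT (0, -2, 2, 0, 2, 1) := by decide
lemma c101 : checkT (0, -2, 2, 0, 2, 3) := by decide
lemma c102 : checkT (0, -2, 2, 2, -2, -3) := by decide
lemma c103 : checkT (0, -2, 2, 2, -2, -1) := by decide
lemma c104 : checkT (0, -2, 2, 2, -2, 1) := by decide
lemma c105 : checkT (0, -2, 2, 2, -2, 3) := by decide
lemma c106 : checkT (0, -2, 2, 2, 0, -3) := by decide
lemma c107 : checkT (0, -2, 2, 2, 0, -1) := by decide
lemma c108 : checkT (0, -2, 2, 2, 0, 1) := by decide
lemma c109 : checkT (0, -2, 2, 2, 0, 3) := by decide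
lemma c110 : checkT (0, -2, 2, 2, 2, -3) := by decide
lemma c111 : checkT (0, -2, 2, 2, 2, -1) := by decide
lemma c112 : checkT (0, -2, 2, 2, 2, 1) := by decide
lemma c113 : checkT (0, -2, 2, 2, 2, 3) := by decide
lemma c114 : checkT (0, 0, -2, 2, 2, -1) := by decide
lemma c115 : checkT (0, 0, -2, 2, 2, 1) := by decide
lemma c116 : checkT (0, 0, -2, 2, 2, 3) := by decide
lemma c117 : checkT (0, 0, 0, 0, 2, 3) := by decide
lemma c118 : checkT (0, 0, 0, 2, -2, 3) := by decide
lemma c119 : checkT (0, 0, 0, 2, 0, 1) := by decide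
lemma c120 : checkT (0, 0, 0, 2, 0, 3) := by decide
lemma c121 : checkT (0, 0, 0, 2, 2, -3) := by decide
lemma c122 : checkT (0, 0, 0, 2, 2, -1) := by decide
lemma c123 : checkT (0, 0, 0, 2, 2, 1) := by decide
lemma c124 : checkT (0, 0, 0, 2, 2, 3) := by decide
lemma F4 : dd4.Forall checkT := ⟨c100, c101, c102, c103, c104, c105, c106, c107, c108, c109, c110, c111, c112, c113, c114, c115, c116, c117, c118, c119, c120, c121, c122, c123, c124⟩
lemma c125 : checkT (0, 0, 2, -2, 0, 3) := by decide
lemma c126 : checkT (0, 0, 2, -2, 2, 1) := by decide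
lemma c127 : checkT (0, 0, 2, -2, 2, 3) := by decide
lemma c128 : checkT (0, 0, 2, 0, -2, 1) := by decide
lemma c129 : checkT (0, 0, 2, 0, -2, 3) := by decide
lemma c130 : checkT (0, 0, 2, 0, 0, -1) := by decide
lemma c131 : checkT (0, 0, 2, 0, 0, 1) := by decide
lemma c132 : checkT (0, 0, 2, 0, 0, 3) := by decide
lemma c133 : checkT (0, 0, 2, 0, 2, -3) := by decide
lemma c134 : checkT (0, 0, 2, 0, 2, -1) := by decide
lemma c135 : checkT (0, 0, 2, 0, 2, 1) := by decide
lemma c136 : checkT (0, 0, 2, 0, 2, 3) := by decide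
lemma c137 : checkT (0, 0, 2, 2, -2, -3) := by decide
lemma c138 : checkT (0, 0, 2, 2, -2, -1) := by decide
lemma c139 : checkT (0, 0, 2, 2, -2, 1) := by decide
lemma c140 : checkT (0, 0, 2, 2, -2, 3) := by decide
lemma c141 : checkT (0, 0, 2, 2, 0, -3) := by decide
lemma c142 : checkT (0, 0, 2, 2, 0, -1) := by decide
lemma c143 : checkT (0, 0, 2, 2, 0, 1) := by decide
lemma c144 : checkT (0, 0, 2, 2, 0, 3) := by decide
lemma c145 : checkT (0, 0, 2, 2, 2, -3) := by decide
lemma c146 : checkT (0, 0, 2, 2, 2, -1) := by decide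
lemma c147 : checkT (0, 0, 2, 2, 2, 1) := by decide
lemma c148 : checkT (0, 0, 2, 2, 2, 3) := by decide
lemma c149 : checkT (0, 2, -2, 0, 2, 3) := by decide
lemma F5 : dd5.Forall checkT := ⟨c125, c126, c127, c128, c129, c130, c131, c132, c133, c134, c135, c136, c137, c138, c139, c140, c141, c142, c143, c144, c145, c146, c147, c148, c149⟩
lemma c150 : checkT (0, 2, -2, 2, -2, 3) := by decide
lemma c151 : checkT (0, 2, -2, 2, 0, 1) := by decide
lemma c152 : checkT (0, 2, -2, 2, 0, 3) := by decide
lemma c153 : checkT (0, 2, -2, 2, 2, -1) := by decide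
lemma c154 : checkT (0, 2, -2, 2, 2, 1) := by decide
lemma c155 : checkT (0, 2, -2, 2, 2, 3) := by decide
lemma c156 : checkT (0, 2, 0, -2, 0, 3) := by decide
lemma c157 : checkT (0, 2, 0, -2, 2, 1) := by decide
lemma c158 : checkT (0, 2, 0, -2, 2, 3) := by decide
lemma c159 : checkT (0, 2, 0, 0, -2, 1) := by decide
lemma c160 : checkT (0, 2, 0, 0, -2, 3) := by decide
lemma c161 : checkT (0, 2, 0, 0, 0, 1) := by decide
lemma c162 : checkT (0, 2, 0, 0, 0, 3) := by decide
lemma c163 : checkT (0, 2, 0, 0, 2, -3) := by decide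
lemma c164 : checkT (0, 2, 0, 0, 2, -1) := by decide
lemma c165 : checkT (0, 2, 0, 0, 2, 1) := by decide
lemma c166 : checkT (0, 2, 0, 0, 2, 3) := by decide
lemma c167 : checkT (0, 2, 0, 2, -2, -3) := by decide
lemma c168 : checkT (0, 2, 0, 2, -2, -1) := by decide
lemma c169 : checkT (0, 2, 0, 2, -2, 1) := by decide
lemma c170 : checkT (0, 2, 0, 2, -2, 3) := by decide
lemma c171 : checkT (0, 2, 0, 2, 0, -3) := by decide
lemma c172 : checkT (0, 2, 0, 2, 0, -1) := by decide
lemma c173 : checkT (0, 2, 0, 2, 0, 1) := by decide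
lemma c174 : checkT (0, 2, 0, 2, 0, 3) := by decide
lemma F6 : dd6.Forall checkT := ⟨c150, c151, c152, c153, c154, c155, c156, c157, c158, c159, c160, c161, c162, c163, c164, c165, c166, c167, c168, c169, c170, c171, c172, c173, c174⟩
lemma c175 : checkT (0, 2, 0, 2, 2, -3) := by decide
lemma c176 : checkT (0, 2, 0, 2, 2, -1) := by decide
lemma c177 : checkT (0, 2, 0, 2, 2, 1) := by decide
lemma c178 : checkT (0, 2, 0, 2, 2, 3) := by decide
lemma c179 : checkT (0, 2, 2, -2, 0, -3) := by decide
lemma c180 : checkT (0, 2, 2, -2, 0, -1) := by decide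
lemma c181 : checkT (0, 2, 2, -2, 0, 1) := by decide
lemma c182 : checkT (0, 2, 2, -2, 0, 3) := by decide
lemma c183 : checkT (0, 2, 2, -2, 2, -3) := by decide
lemma c184 : checkT (0, 2, 2, -2, 2, -1) := by decide
lemma c185 : checkT (0, 2, 2, -2, 2, 1) := by decide
lemma c186 : checkT (0, 2, 2, -2, 2, 3) := by decide
lemma c187 : checkT (0, 2, 2, 0, -2, -3) := by decide
lemma c188 : checkT (0, 2, 2, 0, -2, -1) := by decide
lemma c189 : checkT (0, 2, 2, 0, -2, 1) := by decide
lemma c190 : checkT (0, 2, 2, 0, -2, 3) := by decide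
lemma c191 : checkT (0, 2, 2, 0, 0, -3) := by decide
lemma c192 : checkT (0, 2, 2, 0, 0, -1) := by decide
lemma c193 : checkT (0, 2, 2, 0, 0, 1) := by decide
lemma c194 : checkT (0, 2, 2, 0, 0, 3) := by decide
lemma c195 : checkT (0, 2, 2, 0, 2, -3) := by decide
lemma c196 : checkT (0, 2, 2, 0, 2, -1) := by decide
lemma c197 : checkT (0, 2, 2, 0, 2, 1) := by decide
lemma c198 : checkT (0, 2, 2, 0, 2, 3) := by decide
lemma c199 : checkT (0, 2, 2, 2, -2, -3) := by decide
lemma F7 : dd7.Forall checkT := ⟨c175, c176, c177, c178, c179, c180, c181, c182, c183, c184, c185, c186, c187, c188, c189, c190, c191, c192, c193, c194, c195, c196, c197, c198, c199⟩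
lemma c200 : checkT (0, 2, 2, 2, -2, -1) := by decide
lemma c201 : checkT (0, 2, 2, 2, -2, 1) := by decide
lemma c202 : checkT (0, 2, 2, 2, -2, 3) := by decide
lemma c203 : checkT (0, 2, 2, 2, 0, -3) := by decide
lemma c204 : checkT (0, 2, 2, 2, 0, -1) := by decide
lemma c205 : checkT (0, 2, 2, 2, 0, 1) := by decide
lemma c206 : checkT (0, 2, 2, 2, 0, 3) := by decide
lemma c207 : checkT (0, 2, 2, 2, 2, -3) := by decide
lemma c208 : checkT (0, 2, 2, 2, 2, -1) := by decide
lemma c209 : checkT (0, 2, 2, 2, 2, 1) := by decide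
lemma c210 : checkT (0, 2, 2, 2, 2, 3) := by decide
lemma c211 : checkT (2, -2, 0, 0, 2, 3) := by decide
lemma c212 : checkT (2, -2, 0, 2, -2, 3) := by decide
lemma c213 : checkT (2, -2, 0, 2, 0, 1) := by decide
lemma c214 : checkT (2, -2, 0, 2, 0, 3) := by decide
lemma c215 : checkT (2, -2, 0, 2, 2, -1) := by decide
lemma c216 : checkT (2, -2, 0, 2, 2, 1) := by decide
lemma c217 : checkT (2, -2, 0, 2, 2, 3) := by decide
lemma c218 : checkT (2, -2, 2, -2, 0, 3) := by decide
lemma c219 : checkT (2, -2, 2, -2, 2, 1) := by decide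
lemma c220 : checkT (2, -2, 2, -2, 2, 3) := by decide
lemma c221 : checkT (2, -2, 2, 0, -2, 1) := by decide
lemma c222 : checkT (2, -2, 2, 0, -2, 3) := by decide
lemma c223 : checkT (2, -2, 2, 0, 0, 1) := by decide
lemma c224 : checkT (2, -2, 2, 0, 0, 3) := by decide
lemma F8 : dd8.Forall checkT := ⟨c200, c201, c202, c203, c204, c205, c206, c207, c208, c209, c210, c211, c212, c213, c214, c215, c216, c217, c218, c219, c220, c221, c222, c223, c224⟩
lemma c225 : checkT (2, -2, 2, 0, 2, -3) := by decide
lemma c226 : checkT (2, -2, 2, 0, 2, -1) := by decide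
lemma c227 : checkT (2, -2, 2, 0, 2, 1) := by decide
lemma c228 : checkT (2, -2, 2, 0, 2, 3) := by decide
lemma c229 : checkT (2, -2, 2, 2, -2, -3) := by decide
lemma c230 : checkT (2, -2, 2, 2, -2, -1) := by decide
lemma c231 : checkT (2, -2, 2, 2, -2, 1) := by decide
lemma c232 : checkT (2, -2, 2, 2, -2, 3) := by decide
lemma c233 : checkT (2, -2, 2, 2, 0, -3) := by decide
lemma c234 : checkT (2, -2, 2, 2, 0, -1) := by decide
lemma c235 : checkT (2, -2, 2, 2, 0, 1) := by decide
lemma c236 : checkT (2, -2, 2, 2, 0, 3) := by decide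
lemma c237 : checkT (2, -2, 2, 2, 2, -3) := by decide
lemma c238 : checkT (2, -2, 2, 2, 2, -1) := by decide
lemma c239 : checkT (2, -2, 2, 2, 2, 1) := by decide
lemma c240 : checkT (2, -2, 2, 2, 2, 3) := by decide
lemma c241 : checkT (2, 0, -2, 0, 2, 3) := by decide
lemma c242 : checkT (2, 0, -2, 2, -2, 3) := by decide
lemma c243 : checkT (2, 0, -2, 2, 0, 3) := by decide
lemma c244 : checkT (2, 0, -2, 2, 2, -1) := by decide
lemma c245 : checkT (2, 0, -2, 2, 2, 1) := by decide
lemma c246 : checkT (2, 0, -2, 2, 2, 3) := by decide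
lemma c247 : checkT (2, 0, 0, -2, 0, 3) := by decide
lemma c248 : checkT (2, 0, 0, -2, 2, 3) := by decide
lemma c249 : checkT (2, 0, 0, 0, -2, 3) := by decide
lemma F9 : dd9.Forall checkT := ⟨c225, c226, c227, c228, c229, c230, c231, c232, c233, c234, c235, c236, c237, c238, c239, c240, c241, c242, c243, c244, c245, c246, c247, c248, c249⟩
lemma c250 : checkT (2, 0, 0, 0, 0, 3) := by decide
lemma c251 : checkT (2, 0, 0, 0, 2, -3) := by decide
lemma c252 : checkT (2, 0, 0, 0, 2, -1) := by decide
lemma c253 : checkT (2, 0, 0, 0, 2, 1) := by decide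
lemma c254 : checkT (2, 0, 0, 0, 2, 3) := by decide
lemma c255 : checkT (2, 0, 0, 2, -2, -3) := by decide
lemma c256 : checkT (2, 0, 0, 2, -2, -1) := by decide
lemma c257 : checkT (2, 0, 0, 2, -2, 1) := by decide
lemma c258 : checkT (2, 0, 0, 2, -2, 3) := by decide
lemma c259 : checkT (2, 0, 0, 2, 0, -3) := by decide
lemma c260 : checkT (2, 0, 0, 2, 0, -1) := by decide
lemma c261 : checkT (2, 0, 0, 2, 0, 1) := by decide
lemma c262 : checkT (2, 0, 0, 2, 0, 3) := by decide
lemma c263 : checkT (2, 0, 0, 2, 2, -3) := by decide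
lemma c264 : checkT (2, 0, 0, 2, 2, -1) := by decide
lemma c265 : checkT (2, 0, 0, 2, 2, 1) := by decide
lemma c266 : checkT (2, 0, 0, 2, 2, 3) := by decide
lemma c267 : checkT (2, 0, 2, -2, 0, -3) := by decide
lemma c268 : checkT (2, 0, 2, -2, 0, -1) := by decide
lemma c269 : checkT (2, 0, 2, -2, 0, 1) := by decide
lemma c270 : checkT (2, 0, 2, -2, 0, 3) := by decide
lemma c271 : checkT (2, 0, 2, -2, 2, -3) := by decide
lemma c272 : checkT (2, 0, 2, -2, 2, -1) := by decide
lemma c273 : checkT (2, 0, 2, -2, 2, 1) := by decide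
lemma c274 : checkT (2, 0, 2, -2, 2, 3) := by decide
lemma F10 : dd10.Forall checkT := ⟨c250, c251, c252, c253, c254, c255, c256, c257, c258, c259, c260, c261, c262, c263, c264, c265, c266, c267, c268, c269, c270, c271, c272, c273, c274⟩
lemma c275 : checkT (2, 0, 2, 0, -2, -3) := by decide
lemma c276 : checkT (2, 0, 2, 0, -2, -1) := by decide
lemma c277 : checkT (2, 0, 2, 0, -2, 1) := by decide
lemma c278 : checkT (2, 0, 2, 0, -2, 3) := by decide
lemma c279 : checkT (2, 0, 2, 0, 0, -3) := by decide
lemma c280 : checkT (2, 0, 2, 0, 0, -1) := by decide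
lemma c281 : checkT (2, 0, 2, 0, 0, 1) := by decide
lemma c282 : checkT (2, 0, 2, 0, 0, 3) := by decide
lemma c283 : checkT (2, 0, 2, 0, 2, -3) := by decide
lemma c284 : checkT (2, 0, 2, 0, 2, -1) := by decide
lemma c285 : checkT (2, 0, 2, 0, 2, 1) := by decide
lemma c286 : checkT (2, 0, 2, 0, 2, 3) := by decide
lemma c287 : checkT (2, 0, 2, 2, -2, -3) := by decide
lemma c288 : checkT (2, 0, 2, 2, -2, -1) := by decide
lemma c289 : checkT (2, 0, 2, 2, -2, 1) := by decide
lemma c290 : checkT (2, 0, 2, 2, -2, 3) := by decide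
lemma c291 : checkT (2, 0, 2, 2, 0, -3) := by decide
lemma c292 : checkT (2, 0, 2, 2, 0, -1) := by decide
lemma c293 : checkT (2, 0, 2, 2, 0, 1) := by decide
lemma c294 : checkT (2, 0, 2, 2, 0, 3) := by decide
lemma c295 : checkT (2, 0, 2, 2, 2, -3) := by decide
lemma c296 : checkT (2, 0, 2, 2, 2, -1) := by decide
lemma c297 : checkT (2, 0, 2, 2, 2, 1) := by decide
lemma c298 : checkT (2, 0, 2, 2, 2, 3) := by decide
lemma c299 : checkT (2, 2, -2, 0, 0, -1) := by decide
lemma F11 : dd11.Forall checkT := ⟨c275, c276, c277, c278, c279, c280, c281, c282, c283, c284, c285, c286, c287, c288, c289, c290, c291, c292, c293, c294, c295, c296, c297, c298, c299⟩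
lemma c300 : checkT (2, 2, -2, 0, 0, 1) := by decide
lemma c301 : checkT (2, 2, -2, 0, 0, 3) := by decide
lemma c302 : checkT (2, 2, -2, 0, 2, -1) := by decide
lemma c303 : checkT (2, 2, -2, 0, 2, 1) := by decide
lemma c304 : checkT (2, 2, -2, 0, 2, 3) := by decide
lemma c305 : checkT (2, 2, -2, 2, -2, -1) := by decide
lemma c306 : checkT (2, 2, -2, 2, -2, 1) := by decide
lemma c307 : checkT (2, 2, -2, 2, -2, 3) := by decide
lemma c308 : checkT (2, 2, -2, 2, 0, -1) := by decide
lemma c309 : checkT (2, 2, -2, 2, 0, 1) := by decide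
lemma c310 : checkT (2, 2, -2, 2, 0, 3) := by decide
lemma c311 : checkT (2, 2, -2, 2, 2, -1) := by decide
lemma c312 : checkT (2, 2, -2, 2, 2, 1) := by decide
lemma c313 : checkT (2, 2, -2, 2, 2, 3) := by decide
lemma c314 : checkT (2, 2, 0, -2, 0, -1) := by decide
lemma c315 : checkT (2, 2, 0, -2, 0, 1) := by decide
lemma c316 : checkT (2, 2, 0, -2, 0, 3) := by decide
lemma c317 : checkT (2, 2, 0, -2, 2, -1) := by decide
lemma c318 : checkT (2, 2, 0, -2, 2, 1) := by decide
lemma c319 : checkT (2, 2, 0, -2, 2, 3) := by decide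
lemma c320 : checkT (2, 2, 0, 0, -2, -1) := by decide
lemma c321 : checkT (2, 2, 0, 0, -2, 1) := by decide
lemma c322 : checkT (2, 2, 0, 0, -2, 3) := by decide
lemma c323 : checkT (2, 2, 0, 0, 0, -3) := by decide
lemma c324 : checkT (2, 2, 0, 0, 0, -1) := by decide
lemma F12 : dd12.Forall checkT := ⟨c300, c301, c302, c303, c304, c305, c306, c307, c308, c309, c310, c311, c312, c313, c314, c315, c316, c317, c318, c319, c320, c321, c322, c323, c324⟩
lemma c325 : checkT (2, 2, 0, 0, 0, 1) := by decide
lemma c326 : checkT (2, 2, 0, 0, 0, 3) := by decide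
lemma c327 : checkT (2, 2, 0, 0, 2, -3) := by decide
lemma c328 : checkT (2, 2, 0, 0, 2, -1) := by decide
lemma c329 : checkT (2, 2, 0, 0, 2, 1) := by decide
lemma c330 : checkT (2, 2, 0, 0, 2, 3) := by decide
lemma c331 : checkT (2, 2, 0, 2, -2, -3) := by decide
lemma c332 : checkT (2, 2, 0, 2, -2, -1) := by decide
lemma c333 : checkT (2, 2, 0, 2, -2, 1) := by decide
lemma c334 : checkT (2, 2, 0, 2, -2, 3) := by decide
lemma c335 : checkT (2, 2, 0, 2, 0, -3) := by decide
lemma c336 : checkT (2, 2, 0, 2, 0, -1) := by decide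
lemma c337 : checkT (2, 2, 0, 2, 0, 1) := by decide
lemma c338 : checkT (2, 2, 0, 2, 0, 3) := by decide
lemma c339 : checkT (2, 2, 0, 2, 2, -3) := by decide
lemma c340 : checkT (2, 2, 0, 2, 2, -1) := by decide
lemma c341 : checkT (2, 2, 0, 2, 2, 1) := by decide
lemma c342 : checkT (2, 2, 0, 2, 2, 3) := by decide
lemma c343 : checkT (2, 2, 2, -2, 0, -3) := by decide
lemma c344 : checkT (2, 2, 2, -2, 0, -1) := by decide
lemma c345 : checkT (2, 2, 2, -2, 0, 1) := by decide
lemma c346 : checkT (2, 2, 2, -2, 0, 3) := by decide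
lemma c347 : checkT (2, 2, 2, -2, 2, -3) := by decide
lemma c348 : checkT (2, 2, 2, -2, 2, -1) := by decide
lemma c349 : checkT (2, 2, 2, -2, 2, 1) := by decide
lemma F13 : dd13.Forall checkT := ⟨c325, c326, c327, c328, c329, c330, c331, c332, c333, c334, c335, c336, c337, c338, c339, c340, c341, c342, c343, c344, c345, c346, c347, c348, c349⟩
lemma c350 : checkT (2, 2, 2, -2, 2, 3) := by decide
lemma c351 : checkT (2, 2, 2, 0, -2, -3) := by decide
lemma c352 : checkT (2, 2, 2, 0, -2, -1) := by decide
lemma c353 : checkT (2, 2, 2, 0, -2, 1) := by decide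
lemma c354 : checkT (2, 2, 2, 0, -2, 3) := by decide
lemma c355 : checkT (2, 2, 2, 0, 0, -3) := by decide
lemma c356 : checkT (2, 2, 2, 0, 0, -1) := by decide
lemma c357 : checkT (2, 2, 2, 0, 0, 1) := by decide
lemma c358 : checkT (2, 2, 2, 0, 0, 3) := by decide
lemma c359 : checkT (2, 2, 2, 0, 2, -3) := by decide
lemma c360 : checkT (2, 2, 2, 0, 2, -1) := by decide
lemma c361 : checkT (2, 2, 2, 0, 2, 1) := by decide
lemma c362 : checkT (2, 2, 2, 0, 2, 3) := by decide
lemma c363 : checkT (2, 2, 2, 2, -2, -3) := by decide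
lemma c364 : checkT (2, 2, 2, 2, -2, -1) := by decide
lemma c365 : checkT (2, 2, 2, 2, -2, 1) := by decide
lemma c366 : checkT (2, 2, 2, 2, -2, 3) := by decide
lemma c367 : checkT (2, 2, 2, 2, 0, -3) := by decide
lemma c368 : checkT (2, 2, 2, 2, 0, -1) := by decide
lemma c369 : checkT (2, 2, 2, 2, 0, 1) := by decide
lemma c370 : checkT (2, 2, 2, 2, 0, 3) := by decide
lemma c371 : checkT (2, 2, 2, 2, 2, -3) := by decide
lemma c372 : checkT (2, 2, 2, 2, 2, -1) := by decide
lemma c373 : checkT (2, 2, 2, 2, 2, 1) := by decide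
lemma c374 : checkT (2, 2, 2, 2, 2, 3) := by decide
lemma F14 : dd14.Forall checkT := ⟨c350, c351, c352, c353, c354, c355, c356, c357, c358, c359, c360, c361, c362, c363, c364, c365, c366, c367, c368, c369, c370, c371, c372, c373, c374⟩

lemma deadClosure : ∀ t ∈ deadL, checkT t := by
  intro t ht
  simp only [deadL, List.mem_append, or_assoc] at ht
  rcases ht with h|h|h|h|h|h|h|h|h|h|h|h|h|h|h
  exacts [List.forall_iff_forall_mem.mp F0 _ h, List.forall_iff_forall_mem.mp F1 _ h, List.forall_iff_forall_mem.mp F2 _ h, List.forall_iff_forall_mem.mp F3 _ h, List.forall_iff_forall_mem.mp F4 _ h, List.forall_iff_forall_mem.mp F5 _ h, List.forall_iff_forall_mem.mp F6 _ h, List.forall_iff_forall_mem.mp F7 _ h, List.forall_iff_forall_mem.mp F8 _ h, List.forall_iff_forall_mem.mp F9 _ h, List.forall_iff_forall_mem.mp F10 _ h, List.forall_iff_forall_mem.mp F11 _ h, List.forall_iff_forall_mem.mp F12 _ h, List.forall_iff_forall_mem.mp F13 _ h, List.forall_iff_forall_mem.mp F14 _ h]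

set_option maxRecDepth 10000 in
set_option maxHeartbeats 1000000 in
lemma nofinal_all : deadL.Forall (fun t => ¬ ∀ i : Fin 6, -(bnd i) ≤ tcoord t i ∧ tcoord t i ≤ bnd i - 2) := by
  decide

lemma dead_step (K : Fin 6 → ℤ) (i : Fin 6) (hD : Dead K) (hi : K i = -(Q2 i i)) :
    Dead (fun k => K k + 2 * Q2 k i) := by
  rw [mneg_eq] at hi
  rcases hD with ⟨j, hj⟩ | h
  · rw [tcoord_toT] at hj
    refine Or.inl ⟨j, ?_⟩
    rw [stepT_toT, tcoord_stepT]
    have hij : i ≠ j := by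
      rintro rfl; rw [hi] at hj; omega
    have := offdiag_nonneg i j hij
    omega
  · have hc : checkT (toT K) := deadClosure _ h
    have := hc i (by rw [tcoord_toT, hi])
    unfold Dead
    rw [stepT_toT]
    exact this

lemma dead_nofinal (K : Fin 6 → ℤ) (hD : Dead K)
    (hf : ∀ i : Fin 6, Q2 i i ≤ K i ∧ K i ≤ -(Q2 i i) - 2) : False := by
  rcases hD with ⟨j, hj⟩ | h
  · have := (hf j).2
    rw [mneg_eq] at this
    rw [tcoord_toT] at hj
    omega
  · refine (List.forall_iff_forall_mem.mp nofinal_all) _ h (fun i => ?_)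
    have := hf i
    rw [diag_eq] at this
    rw [tcoord_toT]
    omega

lemma dead_not_init (K : Fin 6 → ℤ) (hD : Dead K) : ¬ InitiatesSuccessfulPath Q2 K := by
  rintro ⟨N, P, hP0, hstep, hfin⟩
  have key : ∀ j, j ≤ N → Dead (P j) := by
    intro j
    induction j with
    | zero => intro _; rw [hP0]; exact hD
    | succ j ih =>
      intro hj
      obtain ⟨i, hi, hPs⟩ := hstep j (by omega)
      rw [hPs]
      exact dead_step _ i (ih (by omega)) hi
  exact dead_nofinal _ (key N le_rfl) hfin

lemma vec_ext (K : Fin 6 → ℤ) (a0 a1 a2 a3 a4 a5 : ℤ)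
    (h0 : K 0 = a0) (h1 : K 1 = a1) (h2 : K 2 = a2)
    (h3 : K 3 = a3) (h4 : K 4 = a4) (h5 : K 5 = a5) :
    K = ![a0,a1,a2,a3,a4,a5] := by
  funext i; fin_cases i <;> assumption

set_option maxHeartbeats 4000000 in
lemma win0 : InitiatesSuccessfulPath Q2 (![0,0,0,0,0,1] : Fin 6 → ℤ) :=
  ⟨0, fun j => fromT (([(0, 0, 0, 0, 0, 1)] : List T).getD j (0,0,0,0,0,0)), rfl, by decide, by decide⟩
set_option maxHeartbeats 4000000 in
lemma win1 : InitiatesSuccessfulPath Q2 (![0,0,0,0,0,-1] : Fin 6 → ℤ) :=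
  ⟨0, fun j => fromT (([(0, 0, 0, 0, 0, -1)] : List T).getD j (0,0,0,0,0,0)), rfl, by decide, by decide⟩
set_option maxHeartbeats 4000000 in
lemma win2 : InitiatesSuccessfulPath Q2 (![0,0,0,0,0,3] : Fin 6 → ℤ) :=
  ⟨11, fun j => fromT (([(0, 0, 0, 0, 0, 3), (0, 0, 2, 0, 0, -3), (0, 2, -2, 2, 0, -1), (2, -2, 0, 2, 0, -1), (-2, 0, 0, 2, 0, -1), (-2, 0, 2, -2, 2, -1), (-2, 2, -2, 0, 2, 1), (0, -2, 0, 0, 2, 1), (0, -2, 0, 2, -2, 1), (0, -2, 2, -2, 0, 1), (0, 0, -2, 0, 0, 3), (0, 0, 0, 0, 0, -3)] : List T).getD j (0,0,0,0,0,0)), rfl, by decide, by decide⟩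
set_option maxHeartbeats 4000000 in
lemma win3 : InitiatesSuccessfulPath Q2 (![0,0,0,0,2,-1] : Fin 6 → ℤ) :=
  ⟨5, fun j => fromT (([(0, 0, 0, 0, 2, -1), (0, 0, 0, 2, -2, -1), (0, 0, 2, -2, 0, -1), (0, 2, -2, 0, 0, 1), (2, -2, 0, 0, 0, 1), (-2, 0, 0, 0, 0, 1)] : List T).getD j (0,0,0,0,0,0)), rfl, by decide, by decide⟩
set_option maxHeartbeats 4000000 in
lemma win4 : InitiatesSuccessfulPath Q2 (![2,0,0,0,0,-1] : Fin 6 → ℤ) :=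
  ⟨5, fun j => fromT (([(2, 0, 0, 0, 0, -1), (-2, 2, 0, 0, 0, -1), (0, -2, 2, 0, 0, -1), (0, 0, -2, 2, 0, 1), (0, 0, 0, -2, 2, 1), (0, 0, 0, 0, -2, 1)] : List T).getD j (0,0,0,0,0,0)), rfl, by decide, by decide⟩
set_option maxHeartbeats 4000000 in
lemma win5 : InitiatesSuccessfulPath Q2 (![0,0,0,2,0,-1] : Fin 6 → ℤ) :=
  ⟨12, fun j => fromT (([(0, 0, 0, 2, 0, -1), (0, 0, 2, -2, 2, -1), (0, 2, -2, 0, 2, 1), (2, -2, 0, 0, 2, 1), (-2, 0, 0, 0, 2, 1), (-2, 0, 0, 2, -2, 1), (-2, 0, 2, -2, 0, 1), (-2, 2, -2, 0, 0, 3), (0, -2, 0, 0, 0, 3), (0, -2, 2, 0, 0, -3), (0, 0, -2, 2, 0, -1), (0, 0, 0, -2, 2, -1), (0, 0, 0, 0, -2, -1)] : List T).getD j (0,0,0,0,0,0)), rfl, by decide, by decide⟩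
set_option maxHeartbeats 4000000 in
lemma win6 : InitiatesSuccessfulPath Q2 (![0,2,0,0,0,-1] : Fin 6 → ℤ) :=
  ⟨12, fun j => fromT (([(0, 2, 0, 0, 0, -1), (2, -2, 2, 0, 0, -1), (-2, 0, 2, 0, 0, -1), (-2, 2, -2, 2, 0, 1), (0, -2, 0, 2, 0, 1), (0, -2, 2, -2, 2, 1), (0, 0, -2, 0, 2, 3), (0, 0, -2, 2, -2, 3), (0, 0, 0, -2, 0, 3), (0, 0, 2, -2, 0, -3), (0, 2, -2, 0, 0, -1), (2, -2, 0, 0, 0, -1), (-2, 0, 0, 0, 0, -1)] : List T).getD j (0,0,0,0,0,0)), rfl, by decide, by decide⟩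
set_option maxHeartbeats 4000000 in
lemma win7 : InitiatesSuccessfulPath Q2 (![2,0,0,0,0,1] : Fin 6 → ℤ) :=
  ⟨12, fun j => fromT (([(2, 0, 0, 0, 0, 1), (-2, 2, 0, 0, 0, 1), (0, -2, 2, 0, 0, 1), (0, 0, -2, 2, 0, 3), (0, 0, 0, -2, 2, 3), (0, 0, 0, 0, -2, 3), (0, 0, 2, 0, -2, -3), (0, 2, -2, 2, -2, -1), (2, -2, 0, 2, -2, -1), (-2, 0, 0, 2, -2, -1), (-2, 0, 2, -2, 0, -1), (-2, 2, -2, 0, 0, 1), (0, -2, 0, 0, 0, 1)] : List T).getD j (0,0,0,0,0,0)), rfl, by decide, by decide⟩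
set_option maxHeartbeats 4000000 in
lemma win8 : InitiatesSuccessfulPath Q2 (![0,0,0,0,2,1] : Fin 6 → ℤ) :=
  ⟨12, fun j => fromT (([(0, 0, 0, 0, 2, 1), (0, 0, 0, 2, -2, 1), (0, 0, 2, -2, 0, 1), (0, 2, -2, 0, 0, 3), (2, -2, 0, 0, 0, 3), (-2, 0, 0, 0, 0, 3), (-2, 0, 2, 0, 0, -3), (-2, 2, -2, 2, 0, -1), (0, -2, 0, 2, 0, -1), (0, -2, 2, -2, 2, -1), (0, 0, -2, 0, 2, 1), (0, 0, -2, 2, -2, 1), (0, 0, 0, -2, 0, 1)] : List T).getD j (0,0,0,0,0,0)), rfl, by decide, by decide⟩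


set_option maxHeartbeats 8000000 in
/-- Exactly 9 of the 96 vectors in the box `{0,2}⁵ × {-1,1,3}` initiate a successful
path for `Q₂`, namely the nine listed vectors. -/
theorem successful_vectors_Q2 (K : Fin 6 → ℤ)
    (h0 : K 0 = 0 ∨ K 0 = 2) (h1 : K 1 = 0 ∨ K 1 = 2)
    (h2 : K 2 = 0 ∨ K 2 = 2) (h3 : K 3 = 0 ∨ K 3 = 2)
    (h4 : K 4 = 0 ∨ K 4 = 2) (h5 : K 5 = -1 ∨ K 5 = 1 ∨ K 5 = 3) :
    InitiatesSuccessfulPath Q2 K ↔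
      K = ![0,0,0,0,0,1] ∨ K = ![0,0,0,0,0,-1] ∨ K = ![0,0,0,0,0,3] ∨
      K = ![0,0,0,0,2,-1] ∨ K = ![2,0,0,0,0,-1] ∨ K = ![0,0,0,2,0,-1] ∨
      K = ![0,2,0,0,0,-1] ∨ K = ![2,0,0,0,0,1] ∨ K = ![0,0,0,0,2,1] := by
  constructor
  · intro hS
    by_contra hR
    have hT : toT K = (K 0, K 1, K 2, K 3, K 4, K 5) := rfl
    obtain h0|h0 := h0 <;> obtain h1|h1 := h1 <;> obtain h2|h2 := h2 <;>
      obtain h3|h3 := h3 <;> obtain h4|h4 := h4 <;> obtain h5|h5|h5 := h5 <;>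
      rw [h0, h1, h2, h3, h4, h5] at hT <;>
      first
      | exact dead_not_init K (Or.inr (by rw [hT]; decide)) hS
      | (exact hR (by
          have := vec_ext K _ _ _ _ _ _ h0 h1 h2 h3 h4 h5
          tauto))
  · rintro (rfl|rfl|rfl|rfl|rfl|rfl|rfl|rfl|rfl)
    exacts [win0, win1, win2, win3, win4, win5, win6, win7, win8]
end
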